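/- Let A be a dendriform algebra over a field F of characteristic zero and let X ⊆ A. Then the dendriform subalgebra of A generated by X (the smallest F-subspace of A containing X and closed under ≺ and ≻) is spanned, as an F-vector space, by the evaluations in A of the Chen–Wang normal tree monomials on X: planar binary trees whose leaves are labeled by elements of X, whose internal nodes are labeled by {≺, ≻}, whose only allowed left-growth pattern is (≻, ≻) — whenever the left child w of an internal node v is itself an internal node, both v and w are labeled ≻ — and which contain no internal node v such that v's left child w is internal and w's left child is also internal (no two consecutive left-growth steps). -/

import Mathlib

/-!
Let `N` be the span of the normal monomials. Every tree evaluates into every closed subspace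
containing `X`, so it suffices to show that `N` is closed under `≺` and `≻`, and by bilinearity
only the products `t ≺ b`, `t ≻ b` with `t` a normal monomial and `b ∈ N` need checking. Normal
monomials have the shapes `x`, `x ≺ r`, `x ≻ r` and `(x ≻ s) ≻ r` with `x ∈ X`. The products
`x ≺ b`, `x ≻ b` and `(x ≻ b) ≻ c` with `x ∈ X` and `b, c ∈ N` lie in `N`, again by bilinearity,
and the three dendriform axioms rewrite every other product into these, by structural induction
on `t`.
-/

/-- Operation labels `≺` (prec) and `≻` (succ). -/
inductive DendOp where
  | prec
  | succ
deriving DecidableEq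

/-- Planar (full) binary trees with internal nodes labeled by `DendOp` and leaves
labeled by elements of `A`. -/
inductive DTree (A : Type*) where
  | leaf : A → DTree A
  | node : DendOp → DTree A → DTree A → DTree A

/-- Evaluation of a labeled tree in `A` using operations `p` (for `≺`) and `s` (for `≻`). -/
def DTree.eval {A : Type*} (p s : A → A → A) : DTree A → A
  | .leaf x => x
  | .node DendOp.prec l r => p (l.eval p s) (r.eval p s)
  | .node DendOp.succ l r => s (l.eval p s) (r.eval p s)

/-- All leaf labels of the tree lie in `X`. -/
def DTree.leavesIn {A : Type*} (X : Set A) : DTree A → Prop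
  | .leaf x => x ∈ X
  | .node _ l r => l.leavesIn X ∧ r.leavesIn X

/-- `t` is a leaf. -/
def DTree.isLeaf {A : Type*} : DTree A → Prop
  | .leaf _ => True
  | .node _ _ _ => False

/-- Chen–Wang normality: the only allowed left-growth pattern is `(≻, ≻)`, with no two
consecutive left-growth steps. -/
def DTree.normalCW {A : Type*} : DTree A → Prop
  | .leaf _ => True
  | .node _ (.leaf _) r => r.normalCW
  | .node op (.node q a b) r =>
      op = DendOp.succ ∧ q = DendOp.succ ∧ a.isLeaf ∧
        (DTree.node q a b).normalCW ∧ r.normalCW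

namespace DTree

theorem eval_mem_of_closed {A : Type*} {p s : A → A → A} {X S : Set A} (hXS : X ⊆ S)
    (hS : ∀ a ∈ S, ∀ b ∈ S, p a b ∈ S ∧ s a b ∈ S) :
    ∀ {t : DTree A}, t.leavesIn X → t.eval p s ∈ S
  | .leaf _, hx => hXS hx
  | .node .prec _ _, ⟨hl, hr⟩ =>
    (hS _ (eval_mem_of_closed hXS hS hl) _ (eval_mem_of_closed hXS hS hr)).1
  | .node .succ _ _, ⟨hl, hr⟩ =>
    (hS _ (eval_mem_of_closed hXS hS hl) _ (eval_mem_of_closed hXS hS hr)).2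

variable {R A : Type*} [CommRing R] [AddCommGroup A] [Module R A]
  (prec succ : A →ₗ[R] A →ₗ[R] A) (X : Set A)

abbrev evalₗ (t : DTree A) : A := t.eval (fun u v => prec u v) (fun u v => succ u v)

def normalSpan : Submodule R A :=
  Submodule.span R {a : A | ∃ t : DTree A, t.leavesIn X ∧ t.normalCW ∧ evalₗ prec succ t = a}

variable {prec succ X}

theorem evalₗ_mem_normalSpan {t : DTree A} (hX : t.leavesIn X) (hn : t.normalCW) :
    evalₗ prec succ t ∈ normalSpan prec succ X :=
  Submodule.subset_span ⟨t, hX, hn, rfl⟩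

theorem apply_mem_normalSpan {f : A →ₗ[R] A}
    (hf : ∀ t : DTree A, t.leavesIn X → t.normalCW →
      f (evalₗ prec succ t) ∈ normalSpan prec succ X)
    {b : A} (hb : b ∈ normalSpan prec succ X) : f b ∈ normalSpan prec succ X := by
  refine (Submodule.map_span_le f _ _).mpr ?_ (Submodule.mem_map_of_mem hb)
  rintro _ ⟨t, hX, hn, rfl⟩
  exact hf t hX hn

theorem prec_leaf_mem_normalSpan {x b : A} (hx : x ∈ X) (hb : b ∈ normalSpan prec succ X) :
    prec x b ∈ normalSpan prec succ X :=
  apply_mem_normalSpan (fun t ht hn => evalₗ_mem_normalSpan (t := .node .prec (.leaf x) t)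
    ⟨hx, ht⟩ hn) hb

theorem succ_leaf_mem_normalSpan {x b : A} (hx : x ∈ X) (hb : b ∈ normalSpan prec succ X) :
    succ x b ∈ normalSpan prec succ X :=
  apply_mem_normalSpan (fun t ht hn => evalₗ_mem_normalSpan (t := .node .succ (.leaf x) t)
    ⟨hx, ht⟩ hn) hb

theorem succ_succ_leaf_mem_normalSpan {x b c : A} (hx : x ∈ X)
    (hb : b ∈ normalSpan prec succ X) (hc : c ∈ normalSpan prec succ X) :
    succ (succ x b) c ∈ normalSpan prec succ X := by
  have hnormal : ∀ s : DTree A, s.leavesIn X → s.normalCW →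
      succ (succ x (evalₗ prec succ s)) c ∈ normalSpan prec succ X := fun s hs hsn =>
    apply_mem_normalSpan (fun t ht htn => evalₗ_mem_normalSpan
      (t := .node .succ (.node .succ (.leaf x) s) t) ⟨⟨hx, hs⟩, ht⟩
      ⟨rfl, rfl, trivial, hsn, htn⟩) hc
  exact apply_mem_normalSpan (f := (succ.flip c).comp (succ x)) hnormal hb

variable (h1 : ∀ x y z : A, prec (succ x y) z = succ x (prec y z))
  (h2 : ∀ x y z : A, prec (prec x y) z = prec x (prec y z) + prec x (succ y z))
  (h3 : ∀ x y z : A, succ x (succ y z) = succ (prec x y) z + succ (succ x y) z)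
include h1 h2 h3

theorem prec_and_succ_evalₗ_mem_normalSpan :
    ∀ {t : DTree A}, t.leavesIn X → t.normalCW → ∀ {b : A}, b ∈ normalSpan prec succ X →
      prec (evalₗ prec succ t) b ∈ normalSpan prec succ X ∧
        succ (evalₗ prec succ t) b ∈ normalSpan prec succ X
  | .leaf _, hx, _, _, hb => ⟨prec_leaf_mem_normalSpan hx hb, succ_leaf_mem_normalSpan hx hb⟩
  | .node .prec (.leaf x) r, ⟨hx, hr⟩, hrn, b, hb => by
    have ihr := prec_and_succ_evalₗ_mem_normalSpan hr hrn hb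
    constructor
    · rw [evalₗ, eval, h2]
      exact add_mem (prec_leaf_mem_normalSpan hx ihr.1) (prec_leaf_mem_normalSpan hx ihr.2)
    · rw [evalₗ, eval, eq_sub_of_add_eq (h3 _ _ _).symm]
      exact sub_mem (succ_leaf_mem_normalSpan hx ihr.2)
        (succ_succ_leaf_mem_normalSpan hx (evalₗ_mem_normalSpan hr hrn) hb)
  | .node .succ (.leaf x) r, ⟨hx, hr⟩, hrn, b, hb => by
    have ihr := prec_and_succ_evalₗ_mem_normalSpan hr hrn hb
    constructor
    · rw [evalₗ, eval, h1]
      exact succ_leaf_mem_normalSpan hx ihr.1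
    · exact succ_succ_leaf_mem_normalSpan hx (evalₗ_mem_normalSpan hr hrn) hb
  | .node .succ (.node .succ (.leaf x) s) r, ⟨⟨hx, hs⟩, hr⟩, ⟨_, _, _, hsn, hrn⟩, b, hb => by
    have ihr := prec_and_succ_evalₗ_mem_normalSpan hr hrn hb
    constructor
    · rw [evalₗ, eval, eval, h1]
      exact succ_succ_leaf_mem_normalSpan hx (evalₗ_mem_normalSpan hs hsn) ihr.1
    · -- `((x ≻ s) ≻ r) ≻ b = (x ≻ s) ≻ (r ≻ b) - (x ≻ (s ≺ r)) ≻ b`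
      rw [evalₗ, eval, eval, eq_sub_of_add_eq' (h3 _ _ _).symm, h1]
      have ihs := prec_and_succ_evalₗ_mem_normalSpan hs hsn (evalₗ_mem_normalSpan hr hrn)
      exact sub_mem (succ_succ_leaf_mem_normalSpan hx (evalₗ_mem_normalSpan hs hsn) ihr.2)
        (succ_succ_leaf_mem_normalSpan hx ihs.1 hb)
  | .node .prec (.node _ _ _) _, _, hn, _, _ => nomatch hn.1
  | .node .succ (.node .prec _ _) _, _, hn, _, _ => nomatch hn.2.1
  | .node .succ (.node .succ (.node _ _ _) _) _, _, hn, _, _ => hn.2.2.1.elim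

theorem normalSpan_closed :
    ∀ a ∈ normalSpan prec succ X, ∀ b ∈ normalSpan prec succ X,
      prec a b ∈ normalSpan prec succ X ∧ succ a b ∈ normalSpan prec succ X := fun _ ha b hb =>
  ⟨apply_mem_normalSpan (f := prec.flip b)
      (fun _ ht hn => (prec_and_succ_evalₗ_mem_normalSpan h1 h2 h3 ht hn hb).1) ha,
    apply_mem_normalSpan (f := succ.flip b)
      (fun _ ht hn => (prec_and_succ_evalₗ_mem_normalSpan h1 h2 h3 ht hn hb).2) ha⟩

end DTree

theorem dendriform_subalgebra_spanned_by_chen_wang_monomials_general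
    (F : Type*) [Field F]
    (A : Type*) [AddCommGroup A] [Module F A]
    (prec succ : A →ₗ[F] A →ₗ[F] A)
    (h1 : ∀ x y z : A, prec (succ x y) z = succ x (prec y z))
    (h2 : ∀ x y z : A, prec (prec x y) z = prec x (prec y z) + prec x (succ y z))
    (h3 : ∀ x y z : A, succ x (succ y z) = succ (prec x y) z + succ (succ x y) z)
    (X : Set A) :
    sInf {p : Submodule F A |
        X ⊆ p ∧ ∀ a ∈ p, ∀ b ∈ p, prec a b ∈ p ∧ succ a b ∈ p} =
      Submodule.span F
        {a : A | ∃ t : DTree A, t.leavesIn X ∧ t.normalCW ∧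
          t.eval (fun u v => prec u v) (fun u v => succ u v) = a} := by
  refine le_antisymm (sInf_le ⟨fun x hx => ?_, DTree.normalSpan_closed h1 h2 h3⟩) ?_
  · exact DTree.evalₗ_mem_normalSpan (t := .leaf x) hx trivial
  · rw [Submodule.span_le]
    rintro _ ⟨t, ht, -, rfl⟩
    exact Submodule.mem_sInf.mpr fun p hp => DTree.eval_mem_of_closed hp.1 hp.2 ht

/-- in a dendriform algebra `A` over a field of characteristic zero, the
dendriform subalgebra generated by `X ⊆ A` is spanned by the evaluations of the
Chen–Wang normal tree monomials on `X`. -/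
theorem dendriform_subalgebra_spanned_by_chen_wang_monomials
    (F : Type*) [Field F] [CharZero F]
    (A : Type*) [AddCommGroup A] [Module F A]
    (prec succ : A →ₗ[F] A →ₗ[F] A)
    (h1 : ∀ x y z : A, prec (succ x y) z = succ x (prec y z))
    (h2 : ∀ x y z : A, prec (prec x y) z = prec x (prec y z) + prec x (succ y z))
    (h3 : ∀ x y z : A, succ x (succ y z) = succ (prec x y) z + succ (succ x y) z)
    (X : Set A) :
    sInf {p : Submodule F A |
        X ⊆ p ∧ ∀ a ∈ p, ∀ b ∈ p, prec a b ∈ p ∧ succ a b ∈ p} =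
      Submodule.span F
        {a : A | ∃ t : DTree A, t.leavesIn X ∧ t.normalCW ∧
          t.eval (fun u v => prec u v) (fun u v => succ u v) = a} :=
  dendriform_subalgebra_spanned_by_chen_wang_monomials_general F A prec succ h1 h2 h3 X
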